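/- Let (X,C,R,κ) be a mass action system whose graph of complexes D = (C,R) satisfies ℓ = t = 1, is not strongly connected, and has |C'| = 1. Then for all i, j ∈ C'': the denominator ∑_{R̃ ∈ T_D(C')} ∏_{a ∈ R̃} κ_a is positive, the matrix I''_κ is invertible, and ((I''_κ)^{−1})_{ji} = −(∑_{R̃ ∈ T^{ij}_D(C' ∪ {j})} ∏_{a ∈ R̃} κ_a) / (∑_{R̃ ∈ T_D(C')} ∏_{a ∈ R̃} κ_a). -/

import Mathlib

open Finset

/-- The matrix `I_κ ∈ ℝ^{c×c}` with `(I_κ)_{ji} = κ_{ij}` for `j ≠ i` and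
`(I_κ)_{ii} = −∑_{k≠i} κ_{ik}`. -/
noncomputable def Ikappa {c : ℕ} (κ : Fin c → Fin c → ℝ) : Matrix (Fin c) (Fin c) ℝ :=
  Matrix.of fun j i => if j = i then -∑ k ∈ Finset.univ.erase i, κ i k else κ i j

/-- `κ` is (the extension by zero of) a family of positive rate coefficients on `R`. -/
def ValidK {c : ℕ} (R : Finset (Fin c × Fin c)) (κ : Fin c → Fin c → ℝ) : Prop :=
  (∀ p ∈ R, 0 < κ p.1 p.2) ∧ ∀ p : Fin c × Fin c, p ∉ R → κ p.1 p.2 = 0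

/-- The monomial map `Θ : ℝ^n_{>0} → ℝ^c`, `Θ(x)_i = ∏_s x_s^{B_{si}}`. -/
noncomputable def Theta {n c : ℕ} (B : Matrix (Fin n) (Fin c) ℕ) (x : Fin n → ℝ) :
    Fin c → ℝ :=
  fun i => ∏ s, x s ^ B s i

/-- The set of positive steady states `E^κ_+` is nonempty. -/
def EposNonempty {n c : ℕ} (B : Matrix (Fin n) (Fin c) ℕ) (κ : Fin c → Fin c → ℝ) : Prop :=
  ∃ x : Fin n → ℝ, (∀ s, 0 < x s) ∧
    (B.map (Nat.cast : ℕ → ℝ)).mulVec ((Ikappa κ).mulVec (Theta B x)) = 0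

/-- The deficiency `δ = dim(ker B ∩ ran I_κ)` equals one. -/
def DeficiencyOneAt {n c : ℕ} (B : Matrix (Fin n) (Fin c) ℕ)
    (κ : Fin c → Fin c → ℝ) : Prop :=
  Module.finrank ℝ
    ↥(LinearMap.ker (Matrix.mulVecLin (B.map (Nat.cast : ℕ → ℝ))) ⊓
      LinearMap.range (Matrix.mulVecLin (Ikappa κ))) = 1

/-- Reachability (existence of a directed walk) in the directed graph with arc set `R`. -/
def Reach {c : ℕ} (R : Finset (Fin c × Fin c)) (a b : Fin c) : Prop :=
  Relation.ReflTransGen (fun x y => (x, y) ∈ R) a b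

/-- `S` is a `U`-branching in the directed graph with arc set `A`: every vertex of `U` has
out-degree `0`, every other vertex has out-degree `1`, and there is no directed circuit. -/
def IsBranching {c : ℕ} (A : Finset (Fin c × Fin c)) (U : Finset (Fin c))
    (S : Finset (Fin c × Fin c)) : Prop :=
  S ⊆ A ∧ (∀ v ∈ U, ∀ a ∈ S, a.1 ≠ v) ∧
    (∀ v : Fin c, v ∉ U → (S.filter (fun a => a.1 = v)).card = 1) ∧
    ¬ ∃ v : Fin c, Relation.TransGen (fun x y => (x, y) ∈ S) v v

/-- `T_D(U)`: the set of `U`-branchings in the directed graph with arc set `A`. -/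
noncomputable def TDU {c : ℕ} (A : Finset (Fin c × Fin c)) (U : Finset (Fin c)) :
    Finset (Finset (Fin c × Fin c)) :=
  @Finset.filter _ (fun S => IsBranching A U S) (Classical.decPred _) A.powerset

/-- `T^{ij}_D(U)`: the set of `U`-branchings containing a directed path from `i` to `j`. -/
noncomputable def TDUij {c : ℕ} (A : Finset (Fin c × Fin c)) (U : Finset (Fin c))
    (i j : Fin c) : Finset (Finset (Fin c × Fin c)) :=
  @Finset.filter _ (fun S => Relation.ReflTransGen (fun x y => (x, y) ∈ S) i j)
    (Classical.decPred _) (TDU A U)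

/-!
Encode a `U`-branching by its out-map `g : C'' → C`, of weight `∏ v, κ v (g v)`. The
`{k, r}`-branchings containing a path from `i` to `k`, each extended by one arc out of `k`, are
exactly the out-maps `g` in which `i` reaches `k` and every cycle runs into `k` (`Drains`). In a
functional graph, `Drains i j` holds iff either the graph is acyclic and `i = j`, or `Drains i k`
holds for a predecessor `k` of `j`, and then for exactly one. Summing the weights over all `g`
turns this into `I''_κ · A = -T · 1`, where `A_{ki}` is the sum over `T^{ik}_D({k, r})` and `T`
the sum over `T_D({r})`. Finally `T > 0`, since choosing for each vertex an arc that decreases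
the distance to `r` gives an acyclic out-map supported on `R`.
-/

open Relation

section FunctionalRelation

variable {α : Type*} {ρ : α → α → Prop}

def removeOut (ρ : α → α → Prop) (k : α) : α → α → Prop := fun x y => x ≠ k ∧ ρ x y

def Acyclic (ρ : α → α → Prop) : Prop := ¬ ∃ v, TransGen ρ v v

def CyclesReach (ρ : α → α → Prop) (k : α) : Prop :=
  ∀ v, TransGen ρ v v → ReflTransGen ρ v k

def Drains (ρ : α → α → Prop) (i k : α) : Prop := CyclesReach ρ k ∧ ReflTransGen ρ i k

lemma reflTransGen_of_removeOut {k a b : α} (h : ReflTransGen (removeOut ρ k) a b) :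
    ReflTransGen ρ a b :=
  ReflTransGen.mono (fun _ _ h => h.2) _ _ h

lemma reflTransGen_removeOut_iff {k a : α} :
    ReflTransGen (removeOut ρ k) a k ↔ ReflTransGen ρ a k := by
  refine ⟨reflTransGen_of_removeOut, fun h => ?_⟩
  induction h using ReflTransGen.head_induction_on with
  | refl => exact .refl
  | @head x y hxy _ ih =>
    by_cases hx : x = k
    · exact hx ▸ .refl
    · exact .head ⟨hx, hxy⟩ ih

lemma reflTransGen_removeOut_of_not_reach {k a b : α} (h : ReflTransGen ρ a b) :
    ¬ ReflTransGen ρ a k → ReflTransGen (removeOut ρ k) a b := by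
  induction h using ReflTransGen.head_induction_on with
  | refl => exact fun _ => .refl
  | @head x y hxy _ ih =>
    intro hx
    refine .head ⟨fun hxk => hx (hxk ▸ .refl), hxy⟩ (ih fun hy => hx (.head hxy hy))

lemma acyclic_of_lt (d : α → ℕ) (hd : ∀ x y, ρ x y → d y < d x) : Acyclic ρ := by
  suffices ∀ {a b}, TransGen ρ a b → d b < d a from fun ⟨v, hv⟩ => (this hv).false
  intro a b h
  induction h with
  | single h => exact hd _ _ h
  | tail _ h ih => exact (hd _ _ h).trans ih

lemma Acyclic.not_drains_pred {i k : α} (hA : Acyclic ρ) (hki : ρ k i) : ¬ Drains ρ i k :=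
  fun hk => hA ⟨i, TransGen.tail' hk.2 hki⟩

variable (hρ : Relator.RightUnique ρ)
include hρ

lemma Relator.RightUnique.removeOut (k : α) : Relator.RightUnique (removeOut ρ k) :=
  fun _ _ _ h₁ h₂ => hρ h₁.2 h₂.2

lemma reflTransGen_of_transGen_self {a b : α} (h : ReflTransGen ρ a b) (ha : TransGen ρ a a) :
    ReflTransGen ρ b a := by
  induction h using ReflTransGen.head_induction_on with
  | refl => exact .refl
  | @head x y hxy _ ih =>
    obtain ⟨z, hxz, hzx⟩ := TransGen.head'_iff.1 ha
    obtain rfl := hρ hxz hxy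
    exact (ih (TransGen.tail' hzx hxz)).trans hzx

-- A cycle of `removeOut ρ k` that reaches `k` would run through `k`, which has no out-arc there.
lemma cyclesReach_iff {k : α} : CyclesReach ρ k ↔ Acyclic (removeOut ρ k) := by
  constructor
  · rintro h ⟨v, hv⟩
    have hvk := reflTransGen_removeOut_iff.2 (h v (TransGen.mono (fun _ _ h => h.2) _ _ hv))
    have hkk := TransGen.trans_right
      (reflTransGen_of_transGen_self (hρ.removeOut k) hvk hv) hv
    obtain ⟨z, hkz, -⟩ := TransGen.head'_iff.1 hkk
    exact hkz.1 rfl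
  · intro h v hv
    by_contra hvk
    obtain ⟨z, hvz, hzv⟩ := TransGen.head'_iff.1 hv
    refine h ⟨v, TransGen.head' ⟨fun hk => hvk (hk ▸ .refl), hvz⟩ ?_⟩
    exact reflTransGen_removeOut_of_not_reach hzv fun hzk => hvk (.head hvz hzk)

lemma reflTransGen_removeOut_of_rel {k a b : α} (hka : ρ k a) (h : ReflTransGen ρ a b) :
    ReflTransGen (removeOut ρ k) a b := by
  induction h with
  | refl => exact .refl
  | @tail x y _ hxy ih =>
    by_cases hx : x = k
    · subst hx
      obtain rfl := hρ hka hxy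
      exact .refl
    · exact ih.tail ⟨hx, hxy⟩

lemma eq_of_reflTransGen_of_cyclesReach {j k k' : α} (hkj : ρ k j) (hk'j : ρ k' j)
    (hk : CyclesReach ρ k) (h : ReflTransGen ρ k k') : k = k' := by
  by_contra hne
  obtain rfl | ⟨y, hky, hyk'⟩ := h.cases_head
  · exact hne rfl
  obtain rfl := hρ hky hkj
  refine (cyclesReach_iff hρ).1 hk ⟨y, TransGen.tail' ?_ ⟨Ne.symm hne, hk'j⟩⟩
  exact reflTransGen_removeOut_of_rel hρ hkj hyk'

lemma Drains.eq {i j k k' : α} (hkj : ρ k j) (hk'j : ρ k' j) (hk : Drains ρ i k)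
    (hk' : Drains ρ i k') : k = k' := by
  rcases ReflTransGen.total_of_right_unique hρ hk.2 hk'.2 with h | h
  · exact eq_of_reflTransGen_of_cyclesReach hρ hkj hk'j hk.1 h
  · exact (eq_of_reflTransGen_of_cyclesReach hρ hk'j hkj hk'.1 h).symm

lemma drains_iff {i j : α} :
    Drains ρ i j ↔ (Acyclic ρ ∧ i = j) ∨ ∃ k, ρ k j ∧ Drains ρ i k := by
  constructor
  · rintro ⟨hcyc, hij⟩
    by_cases hA : Acyclic ρ
    · obtain rfl | ⟨k, hik, hkj⟩ := hij.cases_tail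
      · exact .inl ⟨hA, rfl⟩
      · exact .inr ⟨k, hkj, fun v hv => (hA ⟨v, hv⟩).elim, hik⟩
    · obtain ⟨v, hv⟩ := not_not.1 hA
      have hjj := TransGen.trans_right (reflTransGen_of_transGen_self hρ (hcyc v hv) hv)
        (TransGen.trans_left hv (hcyc v hv))
      obtain ⟨k, hjk, hkj⟩ := TransGen.tail'_iff.1 hjj
      exact .inr ⟨k, hkj, fun v hv => (hcyc v hv).trans hjk, hij.trans hjk⟩
  · rintro (⟨hA, rfl⟩ | ⟨k, hkj, hk, hik⟩)
    · exact ⟨fun v hv => (hA ⟨v, hv⟩).elim, .refl⟩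
    · exact ⟨fun v hv => (hk v hv).tail hkj, hik.tail hkj⟩

end FunctionalRelation

abbrev NonRoot {c : ℕ} (r : Fin c) : Type := {x : Fin c // x ≠ r}

section OutMap

variable {c : ℕ} {r : Fin c}

def outRel (g : NonRoot r → Fin c) : Fin c → Fin c → Prop :=
  fun x y => ∃ h : x ≠ r, g ⟨x, h⟩ = y

lemma rightUnique_outRel (g : NonRoot r → Fin c) : Relator.RightUnique (outRel g) := by
  rintro x _ _ ⟨_, rfl⟩ ⟨_, rfl⟩
  rfl

def arcs (D : Finset (NonRoot r)) (g : NonRoot r → Fin c) :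
    Finset (Fin c × Fin c) :=
  D.image fun v : NonRoot r => ((v : Fin c), g v)

variable {D : Finset (NonRoot r)} {g g' : NonRoot r → Fin c}

lemma mem_arcs {p : Fin c × Fin c} :
    p ∈ arcs D g ↔ ∃ h : p.1 ≠ r, ⟨p.1, h⟩ ∈ D ∧ g ⟨p.1, h⟩ = p.2 := by
  constructor
  · rintro hp
    obtain ⟨v, hv, rfl⟩ := mem_image.1 hp
    exact ⟨v.2, hv, rfl⟩
  · rintro ⟨h, hD, hg⟩
    exact mem_image.2 ⟨_, hD, Prod.ext rfl hg⟩

lemma arcs_univ_rel : (fun x y => (x, y) ∈ arcs univ g) = outRel g := by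
  ext x y
  simp [mem_arcs, outRel]

lemma arcs_erase_rel (k : NonRoot r) :
    (fun x y => (x, y) ∈ arcs (univ.erase k) g) = removeOut (outRel g) ↑k := by
  ext x y
  simp only [mem_arcs, mem_erase, mem_univ, and_true, removeOut, outRel, ne_eq, ← Subtype.val_inj]
  tauto

lemma arcs_congr (h : ∀ v ∈ D, g v = g' v) : arcs D g = arcs D g' :=
  image_congr fun v hv => by rw [h v hv]

lemma eq_of_arcs_eq (h : arcs D g = arcs D g') {v} (hv : v ∈ D) : g v = g' v := by
  have hmem : ((v : Fin c), g v) ∈ arcs D g' := h ▸ mem_arcs.2 ⟨v.2, hv, rfl⟩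
  obtain ⟨_, -, hg⟩ := mem_arcs.1 hmem
  exact hg.symm

lemma prod_arcs (κ : Fin c → Fin c → ℝ) :
    ∏ a ∈ arcs D g, κ a.1 a.2 = ∏ v ∈ D, κ ↑v (g v) :=
  prod_image fun _ _ _ _ h => Subtype.ext (congrArg Prod.fst h)

lemma exists_forall_mem_iff_of_card_filter_eq_one {β γ : Type*} [DecidableEq β]
    {S : Finset (β × γ)} {v : β} (h : (S.filter fun a => a.1 = v).card = 1) :
    ∃ y, ∀ z, (v, z) ∈ S ↔ z = y := by
  obtain ⟨e, he⟩ := card_eq_one.1 h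
  have hmem : ∀ a, a ∈ S ∧ a.1 = v ↔ a = e := fun a => by simpa using Finset.ext_iff.1 he a
  obtain rfl : e.1 = v := ((hmem e).2 rfl).2
  exact ⟨e.2, fun z => by simpa [Prod.ext_iff] using hmem (e.1, z)⟩

variable {U : Finset (Fin c)} (hr : r ∈ U) (hD : ∀ v, v ∈ D ↔ ↑v ∉ U)
include hr hD

lemma exists_arcs_eq_of_isBranching {S : Finset (Fin c × Fin c)} (hS : IsBranching univ U S) :
    ∃ g, arcs D g = S := by
  obtain ⟨-, hU, hcard, -⟩ := hS
  have hout : ∀ v : NonRoot r, ∃ y, v ∈ D → ∀ z, (↑v, z) ∈ S ↔ z = y := by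
    intro v
    by_cases hv : v ∈ D
    · obtain ⟨y, hy⟩ := exists_forall_mem_iff_of_card_filter_eq_one (hcard _ ((hD v).1 hv))
      exact ⟨y, fun _ => hy⟩
    · exact ⟨v, fun h => (hv h).elim⟩
  choose g hg using hout
  refine ⟨g, ext fun p => mem_arcs.trans ⟨fun ⟨_, hpD, hgp⟩ => (hg _ hpD p.2).2 hgp.symm,
    fun hp => ?_⟩⟩
  have hpU : p.1 ∉ U := fun h => hU _ h p hp rfl
  have hpr : p.1 ≠ r := fun h => hpU (h ▸ hr)
  have hpD := (hD ⟨p.1, hpr⟩).2 hpU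
  exact ⟨hpr, hpD, ((hg _ hpD p.2).1 hp).symm⟩

lemma isBranching_arcs (hcyc : Acyclic fun x y => (x, y) ∈ arcs D g) :
    IsBranching univ U (arcs D g) := by
  refine ⟨subset_univ _, ?_, fun v hv => ?_, hcyc⟩
  · rintro v hv a ha rfl
    obtain ⟨h, haD, -⟩ := mem_arcs.1 ha
    exact (hD _).1 haD hv
  · have hvr : v ≠ r := fun h => hv (h ▸ hr)
    rw [card_eq_one]
    refine ⟨(v, g ⟨v, hvr⟩), ?_⟩
    ext ⟨x, y⟩
    simp only [mem_filter, mem_arcs, mem_singleton, Prod.mk.injEq]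
    constructor
    · rintro ⟨⟨_, -, hy⟩, rfl⟩
      exact ⟨rfl, hy.symm⟩
    · rintro ⟨rfl, rfl⟩
      exact ⟨⟨hvr, (hD _).2 hv, rfl⟩, rfl⟩

lemma isBranching_univ_iff {S : Finset (Fin c × Fin c)} :
    IsBranching univ U S ↔ ∃ g, arcs D g = S ∧ Acyclic fun x y => (x, y) ∈ arcs D g := by
  refine ⟨fun hS => ?_, fun ⟨g, hgS, hcyc⟩ => hgS ▸ isBranching_arcs hr hD hcyc⟩
  obtain ⟨g, rfl⟩ := exists_arcs_eq_of_isBranching hr hD hS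
  exact ⟨g, rfl, hS.2.2.2⟩

end OutMap

section BranchingSums

open scoped Classical

variable {c : ℕ} {r : Fin c} (κ : Fin c → Fin c → ℝ)

lemma mem_TDU {A : Finset (Fin c × Fin c)} {U : Finset (Fin c)} {S : Finset (Fin c × Fin c)} :
    S ∈ TDU A U ↔ IsBranching A U S := by
  simp only [TDU, mem_filter, mem_powerset, and_iff_right_iff_imp]
  exact fun h => h.1

lemma mem_TDUij {A : Finset (Fin c × Fin c)} {U : Finset (Fin c)} {i j : Fin c}
    {S : Finset (Fin c × Fin c)} :
    S ∈ TDUij A U i j ↔ IsBranching A U S ∧ ReflTransGen (fun x y => (x, y) ∈ S) i j := by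
  simp only [TDUij, mem_filter, mem_TDU]

lemma TDU_eq_filter (R : Finset (Fin c × Fin c)) (U : Finset (Fin c)) :
    TDU R U = (TDU univ U).filter (· ⊆ R) := by
  ext S
  simp only [mem_filter, mem_TDU, IsBranching, subset_univ, true_and]
  tauto

lemma TDUij_eq_filter (R : Finset (Fin c × Fin c)) (U : Finset (Fin c)) (i j : Fin c) :
    TDUij R U i j = (TDUij univ U i j).filter (· ⊆ R) := by
  ext S
  simp only [mem_filter, mem_TDUij, IsBranching, subset_univ, true_and]
  tauto

lemma sum_prod_filter_subset {R : Finset (Fin c × Fin c)} (hz : ∀ p ∉ R, κ p.1 p.2 = 0)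
    (s : Finset (Finset (Fin c × Fin c))) :
    ∑ S ∈ s.filter (· ⊆ R), ∏ a ∈ S, κ a.1 a.2 = ∑ S ∈ s, ∏ a ∈ S, κ a.1 a.2 :=
  sum_filter_of_ne fun _ _ hS a ha => by_contra fun haR => hS (prod_eq_zero ha (hz a haR))

lemma sum_TDU_univ_singleton (F : Finset (Fin c × Fin c) → ℝ) :
    ∑ S ∈ TDU univ {r}, F S =
      ∑ g : NonRoot r → Fin c, if Acyclic (outRel g) then F (arcs univ g) else 0 := by
  have hD : ∀ v : NonRoot r, v ∈ univ ↔ ↑v ∉ ({r} : Finset (Fin c)) := fun v => by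
    simpa using v.2
  rw [← sum_filter]
  refine (sum_nbij (arcs univ) (fun g hg => ?_) (fun g _ g' _ h => ?_) (fun S hS => ?_)
    fun _ _ => rfl).symm
  · exact mem_TDU.2 ((isBranching_univ_iff (mem_singleton_self r) hD).2
      ⟨g, rfl, arcs_univ_rel ▸ (mem_filter.1 hg).2⟩)
  · exact funext fun v => eq_of_arcs_eq h (mem_univ v)
  · obtain ⟨g, rfl, hg⟩ := (isBranching_univ_iff (mem_singleton_self r) hD).1 (mem_TDU.1 hS)
    exact ⟨g, mem_filter.2 ⟨mem_univ g, arcs_univ_rel ▸ hg⟩, rfl⟩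

lemma sum_TDUij_univ (F : Finset (Fin c × Fin c) → ℝ) (i k : NonRoot r) (m : Fin c) :
    ∑ S ∈ TDUij univ (insert ↑k {r}) ↑i ↑k, F S =
      ∑ g : NonRoot r → Fin c,
        if Drains (outRel g) ↑i ↑k ∧ g k = m then F (arcs (univ.erase k) g) else 0 := by
  have hD : ∀ v : NonRoot r,
      v ∈ univ.erase k ↔ ↑v ∉ (insert ↑k {r} : Finset (Fin c)) := fun v => by
    simp [← Subtype.val_inj, v.2]
  have hbr := fun S => isBranching_univ_iff (S := S) (mem_insert_of_mem (mem_singleton_self r)) hD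
  rw [← sum_filter]
  refine (sum_nbij (arcs (univ.erase k)) (fun g hg => ?_) (fun g hg g' hg' h => ?_)
    (fun S hS => ?_) fun _ _ => rfl).symm
  · obtain ⟨⟨hcyc, hik⟩, -⟩ := (mem_filter.1 hg).2
    refine mem_TDUij.2 ⟨(hbr _).2 ⟨g, rfl, ?_⟩, ?_⟩ <;> rw [arcs_erase_rel]
    · exact (cyclesReach_iff (rightUnique_outRel g)).1 hcyc
    · exact reflTransGen_removeOut_iff.2 hik
  · funext v
    by_cases hv : v = k
    · rw [hv, (mem_filter.1 hg).2.2, (mem_filter.1 hg').2.2]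
    · exact eq_of_arcs_eq h (mem_erase.2 ⟨hv, mem_univ v⟩)
  · obtain ⟨hS, hik⟩ := mem_TDUij.1 hS
    obtain ⟨g, rfl, hcyc⟩ := (hbr _).1 hS
    have hupd : arcs (univ.erase k) (Function.update g k m) = arcs (univ.erase k) g :=
      arcs_congr fun v hv => Function.update_of_ne (mem_erase.1 hv).1 _ _
    rw [← hupd, arcs_erase_rel] at hcyc hik
    refine ⟨Function.update g k m, mem_filter.2 ⟨mem_univ _, ⟨?_, ?_⟩, ?_⟩, hupd⟩
    · exact (cyclesReach_iff (rightUnique_outRel _)).2 hcyc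
    · exact reflTransGen_removeOut_iff.1 hik
    · exact Function.update_self k m g

end BranchingSums

section KirchhoffSums

open scoped Classical

variable {c : ℕ} {r : Fin c} (κ : Fin c → Fin c → ℝ) {R : Finset (Fin c × Fin c)}

lemma sum_TDU_eq_sum_acyclic (hz : ∀ p ∉ R, κ p.1 p.2 = 0) :
    ∑ S ∈ TDU R {r}, ∏ a ∈ S, κ a.1 a.2 =
      ∑ g : NonRoot r → Fin c,
        if Acyclic (outRel g) then ∏ v : NonRoot r, κ ↑v (g v) else 0 := by
  rw [TDU_eq_filter, sum_prod_filter_subset κ hz, sum_TDU_univ_singleton]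
  simp only [prod_arcs]

lemma mul_sum_TDUij_eq (hz : ∀ p ∉ R, κ p.1 p.2 = 0) (i k : NonRoot r) (m : Fin c) :
    κ k m * ∑ S ∈ TDUij R (insert ↑k {r}) ↑i ↑k, ∏ a ∈ S, κ a.1 a.2 =
      ∑ g : NonRoot r → Fin c,
        if Drains (outRel g) ↑i ↑k ∧ g k = m then ∏ v : NonRoot r, κ ↑v (g v) else 0 := by
  rw [TDUij_eq_filter, sum_prod_filter_subset κ hz, sum_TDUij_univ _ i k m, mul_sum]
  refine sum_congr rfl fun g _ => ?_
  split_ifs with h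
  · rw [prod_arcs, ← h.2, mul_prod_erase _ (fun v : NonRoot r => κ ↑v (g v)) (mem_univ k)]
  · rw [mul_zero]

lemma sum_ite_drains_sub_sum_ite (g : NonRoot r → Fin c) (i j : NonRoot r)
    (w : ℝ) :
    ∑ k : NonRoot r, (if Drains (outRel g) ↑i ↑k ∧ g k = ↑j then w else 0) -
        ∑ m : Fin c, (if Drains (outRel g) ↑i ↑j ∧ g j = m then w else 0) =
      -(if Acyclic (outRel g) ∧ i = j then w else 0) := by
  have hρ := rightUnique_outRel g
  have hpred : ∑ k : NonRoot r, (if Drains (outRel g) ↑i ↑k ∧ g k = ↑j then w else 0) =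
      if ∃ k, outRel g k ↑j ∧ Drains (outRel g) ↑i k then w else 0 := by
    split_ifs with h
    · obtain ⟨k, ⟨hk, hkj⟩, hdk⟩ := h
      refine (sum_eq_single_of_mem ⟨k, hk⟩ (mem_univ _) fun k' _ hne => if_neg ?_).trans
        (if_pos ⟨hdk, hkj⟩)
      rintro ⟨hdk', hk'j⟩
      exact hne (Subtype.ext (hdk'.eq hρ ⟨k'.2, hk'j⟩ ⟨hk, hkj⟩ hdk))
    · exact sum_eq_zero fun k _ => if_neg fun ⟨hdk, hkj⟩ => h ⟨k, ⟨k.2, hkj⟩, hdk⟩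
  have hsucc : ∑ m : Fin c, (if Drains (outRel g) ↑i ↑j ∧ g j = m then w else 0) =
      if Drains (outRel g) ↑i ↑j then w else 0 := by
    by_cases h : Drains (outRel g) ↑i ↑j <;> simp [h]
  have hexcl : Acyclic (outRel g) ∧ i = j → ¬ ∃ k, outRel g k ↑j ∧ Drains (outRel g) ↑i k := by
    rintro ⟨hA, rfl⟩ ⟨k, hki, hk⟩
    exact hA.not_drains_pred hki hk
  rw [hpred, hsucc, drains_iff hρ, Subtype.val_inj]
  by_cases hA : Acyclic (outRel g) ∧ i = j
  · rw [if_pos hA, if_neg (hexcl hA), if_pos (.inl hA)]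
    ring
  · by_cases hE : ∃ k, outRel g k ↑j ∧ Drains (outRel g) ↑i k
    · rw [if_pos hE, if_neg hA, if_pos (.inr hE)]
      ring
    · rw [if_neg hE, if_neg hA, if_neg (not_or.2 ⟨hA, hE⟩)]
      ring

lemma Ikappa_apply (j k : Fin c) : Ikappa κ j k = κ k j - if j = k then ∑ m, κ k m else 0 := by
  by_cases h : j = k
  · subst h
    simp only [Ikappa, Matrix.of_apply, if_true]
    rw [← add_sum_erase _ _ (mem_univ j)]
    ring
  · simp [Ikappa, h]

lemma sum_Ikappa_mul_sum_TDUij (hz : ∀ p ∉ R, κ p.1 p.2 = 0) (i j : NonRoot r) :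
    ∑ k : NonRoot r,
        Ikappa κ ↑j ↑k * ∑ S ∈ TDUij R (insert ↑k {r}) ↑i ↑k, ∏ a ∈ S, κ a.1 a.2 =
      -(if i = j then ∑ S ∈ TDU R {r}, ∏ a ∈ S, κ a.1 a.2 else 0) := by
  set A : NonRoot r → ℝ :=
    fun k => ∑ S ∈ TDUij R (insert ↑k {r}) ↑i ↑k, ∏ a ∈ S, κ a.1 a.2 with hA
  set w : (NonRoot r → Fin c) → ℝ :=
    fun g => ∏ v : NonRoot r, κ ↑v (g v) with hw
  calc ∑ k : NonRoot r, Ikappa κ ↑j ↑k * A k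
        = ∑ k : NonRoot r, κ ↑k ↑j * A k - ∑ m, κ ↑j m * A j := by
        simp only [Ikappa_apply, sub_mul, sum_sub_distrib, ite_mul, zero_mul, Subtype.val_inj,
          sum_ite_eq, mem_univ, if_true, sum_mul]
    _ = ∑ g, (∑ k : NonRoot r, (if Drains (outRel g) ↑i ↑k ∧ g k = ↑j then w g else 0) -
          ∑ m, (if Drains (outRel g) ↑i ↑j ∧ g j = m then w g else 0)) := by
        simp only [hA, hw, mul_sum_TDUij_eq κ hz]
        rw [sum_sub_distrib, sum_comm, sum_comm (s := (univ : Finset (Fin c)))]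
    _ = ∑ g, -(if Acyclic (outRel g) ∧ i = j then w g else 0) :=
        sum_congr rfl fun g _ => sum_ite_drains_sub_sum_ite g i j (w g)
    _ = -(if i = j then ∑ S ∈ TDU R {r}, ∏ a ∈ S, κ a.1 a.2 else 0) := by
        rw [sum_neg_distrib, sum_TDU_eq_sum_acyclic κ hz]
        split_ifs with h <;> simp [h, hw]

def ReachWithin (R : Finset (Fin c × Fin c)) (r : Fin c) : ℕ → Fin c → Prop
  | 0, v => v = r
  | n + 1, v => v = r ∨ ∃ w, (v, w) ∈ R ∧ ReachWithin R r n w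

lemma exists_reachWithin (hreach : ∀ k, Reach R k r) (v : Fin c) : ∃ n, ReachWithin R r n v := by
  induction hreach v using ReflTransGen.head_induction_on with
  | refl => exact ⟨0, rfl⟩
  | head hxy _ ih =>
    obtain ⟨n, hn⟩ := ih
    exact ⟨n + 1, .inr ⟨_, hxy, hn⟩⟩

lemma exists_acyclic_outRel (hreach : ∀ k, Reach R k r) :
    ∃ g : NonRoot r → Fin c, (∀ v, (↑v, g v) ∈ R) ∧ Acyclic (outRel g) := by
  let d v := Nat.find (exists_reachWithin hreach v)
  have hstep : ∀ v : NonRoot r, ∃ w, ((v : Fin c), w) ∈ R ∧ d w < d v := by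
    intro v
    have hv : ReachWithin R r (d v) v := Nat.find_spec (exists_reachWithin hreach v)
    rcases hd : d v with _ | n
    · rw [hd] at hv
      exact (v.2 hv).elim
    · rw [hd] at hv
      rcases hv with h | ⟨w, hw, hwn⟩
      · exact (v.2 h).elim
      · exact ⟨w, hw, Nat.lt_succ_of_le (Nat.find_min' _ hwn)⟩
  choose g hgR hgd using hstep
  exact ⟨g, hgR, acyclic_of_lt d fun x _ ⟨h, hxy⟩ => hxy ▸ hgd ⟨x, h⟩⟩

lemma sum_TDU_pos (hreach : ∀ k, Reach R k r) (hκ : ValidK R κ) :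
    0 < ∑ S ∈ TDU R {r}, ∏ a ∈ S, κ a.1 a.2 := by
  obtain ⟨g₀, hg₀R, hg₀⟩ := exists_acyclic_outRel hreach
  have hnn : ∀ p : Fin c × Fin c, 0 ≤ κ p.1 p.2 := fun p =>
    if hp : p ∈ R then (hκ.1 p hp).le else (hκ.2 p hp).ge
  rw [sum_TDU_eq_sum_acyclic κ hκ.2]
  refine sum_pos' (fun g _ => ?_) ⟨g₀, mem_univ _, ?_⟩
  · split_ifs
    exacts [prod_nonneg fun v _ => hnn (_, _), le_rfl]
  · rw [if_pos hg₀]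
    exact prod_pos fun v _ => hκ.1 _ (hg₀R v)

end KirchhoffSums

theorem stmt9_general {c : ℕ}
    (R : Finset (Fin c × Fin c))
    -- `{r} = C'` is the vertex set of the unique absorbing strong component (`ℓ = t = 1`):
    (r : Fin c)
    (hreach : ∀ k : Fin c, Reach R k r)
    (κ : Fin c → Fin c → ℝ) (hκ : ValidK R κ)
    -- `Ipp` is the submatrix `I''_κ` of `I_κ` with rows and columns indexed by `C''`:
    (Ipp : Matrix {x : Fin c // x ≠ r} {x : Fin c // x ≠ r} ℝ)
    (hIpp : ∀ j i : {x : Fin c // x ≠ r}, Ipp j i = Ikappa κ j.val i.val) :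
    0 < (∑ S ∈ TDU R {r}, ∏ a ∈ S, κ a.1 a.2) ∧
    IsUnit Ipp ∧
    ∀ i j : {x : Fin c // x ≠ r},
      Ipp⁻¹ j i =
        -(∑ S ∈ TDUij R (insert (j : Fin c) {r}) i.val j.val, ∏ a ∈ S, κ a.1 a.2) /
          (∑ S ∈ TDU R {r}, ∏ a ∈ S, κ a.1 a.2) := by
  set T := ∑ S ∈ TDU R {r}, ∏ a ∈ S, κ a.1 a.2
  have hT : 0 < T := sum_TDU_pos κ hreach hκ
  set N : Matrix {x : Fin c // x ≠ r} {x : Fin c // x ≠ r} ℝ := Matrix.of fun k i =>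
    -(∑ S ∈ TDUij R (insert (k : Fin c) {r}) i.val k.val, ∏ a ∈ S, κ a.1 a.2) / T
  have hmul : Ipp * N = 1 := by
    ext j i
    simp only [Matrix.mul_apply, hIpp, N, Matrix.of_apply, mul_div_assoc', mul_neg, ← sum_div,
      sum_neg_distrib, sum_Ikappa_mul_sum_TDUij κ hκ.2, Matrix.one_apply, eq_comm (a := i), neg_neg]
    split_ifs
    · exact div_self hT.ne'
    · simp
  refine ⟨hT, (Matrix.isUnit_iff_isUnit_det _).2 (Matrix.isUnit_det_of_right_inverse hmul),
    fun i j => ?_⟩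
  rw [Matrix.inv_eq_right_inv hmul]
  rfl

theorem stmt9 {c : ℕ}
    (R : Finset (Fin c × Fin c)) (hloop : ∀ v : Fin c, (v, v) ∉ R)
    -- `{r} = C'` is the vertex set of the unique absorbing strong component (`ℓ = t = 1`):
    (r : Fin c)
    (habs : ∀ p ∈ R, p.1 ≠ r)
    (hreach : ∀ k : Fin c, Reach R k r)
    (hweak : ∀ a b : Fin c,
      Relation.ReflTransGen (fun x y => (x, y) ∈ R ∨ (y, x) ∈ R) a b)
    (hnsc : ¬ ∀ a b : Fin c, Reach R a b)
    (κ : Fin c → Fin c → ℝ) (hκ : ValidK R κ)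
    -- `Ipp` is the submatrix `I''_κ` of `I_κ` with rows and columns indexed by `C''`:
    (Ipp : Matrix {x : Fin c // x ≠ r} {x : Fin c // x ≠ r} ℝ)
    (hIpp : ∀ j i : {x : Fin c // x ≠ r}, Ipp j i = Ikappa κ j.val i.val) :
    0 < (∑ S ∈ TDU R {r}, ∏ a ∈ S, κ a.1 a.2) ∧
    IsUnit Ipp ∧
    ∀ i j : {x : Fin c // x ≠ r},
      Ipp⁻¹ j i =
        -(∑ S ∈ TDUij R (insert (j : Fin c) {r}) i.val j.val, ∏ a ∈ S, κ a.1 a.2) /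
          (∑ S ∈ TDU R {r}, ∏ a ∈ S, κ a.1 a.2) :=
  stmt9_general R r hreach κ hκ Ipp hIpp
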